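/- arXiv:1005.0975 — 2 statements merged into one kernel-verified Lean document; each statement's English description precedes it below -/
import Mathlib

section
/- A function u : Ω → (-∞,+∞] on an H-convex set Ω is ℓ-H-semiconvex if and only if the function g ↦ u(g) + ℓ‖ξ₁(g)‖² is H-convex, where the key algebraic identity is: (1-λ)‖ξ₁(g)‖² + λ‖ξ₁(g')‖² - ‖ξ₁(g·δ_λ(g⁻¹g'))‖² = λ(1-λ)‖ξ₁(g) - ξ₁(g')‖² for all g, g' ∈ H_g, λ ∈ [0,1]. -/
noncomputable def hmul (g g' : ℝ × ℝ × ℝ) : ℝ × ℝ × ℝ :=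
  (g.1 + g'.1, g.2.1 + g'.2.1, g.2.2 + g'.2.2 + (g.1 * g'.2.1 - g'.1 * g.2.1) / 2)

noncomputable def hinv (g : ℝ × ℝ × ℝ) : ℝ × ℝ × ℝ := (-g.1, -g.2.1, -g.2.2)

noncomputable def dil (l : ℝ) (g : ℝ × ℝ × ℝ) : ℝ × ℝ × ℝ :=
  (l * g.1, l * g.2.1, l ^ 2 * g.2.2)

/-- The horizontal plane through `g`. -/
def HP (g : ℝ × ℝ × ℝ) : Set (ℝ × ℝ × ℝ) :=
  {g' | g'.2.2 = g.2.2 + (g.1 * g'.2.1 - g'.1 * g.2.1) / 2}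

/-- Projection on the first layer. -/
noncomputable def xi1 (g : ℝ × ℝ × ℝ) : ℝ × ℝ := (g.1, g.2.1)

/-- The twisted convex combination `σ_{g,g'}(λ) = g · δ_λ(g⁻¹ g')`. -/
noncomputable def tcc (g g' : ℝ × ℝ × ℝ) (l : ℝ) : ℝ × ℝ × ℝ :=
  hmul g (dil l (hmul (hinv g) g'))

/-- Squared Euclidean norm on the first layer. -/
noncomputable def sqnorm (p : ℝ × ℝ) : ℝ := p.1 ^ 2 + p.2 ^ 2

/-!
The horizontal projection `ξ₁` turns the twisted convex combination `g · δ_λ(g⁻¹ g')` into the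
ordinary convex combination `(1 - λ) ξ₁ g + λ ξ₁ g'`, so the defect of convexity of `g ↦ ‖ξ₁ g‖²`
is the Euclidean one, `λ(1 - λ)‖ξ₁ g - ξ₁ g'‖²`. Adding `ℓ` times this identity to both sides
of the semiconvexity inequality gives the convexity inequality of the shifted function: in
`EReal`, multiplication by a nonnegative real distributes over adding a real, and adding a real
is cancellable.
-/

lemma xi1_tcc (g g' : ℝ × ℝ × ℝ) (l : ℝ) :
    xi1 (tcc g g' l) = (1 - l) • xi1 g + l • xi1 g' := by
  simp only [tcc, hmul, hinv, dil, xi1, Prod.smul_mk, Prod.mk_add_mk, smul_eq_mul, Prod.mk.injEq]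
  constructor <;> ring

lemma xi1_hmul_hinv (g g' : ℝ × ℝ × ℝ) : xi1 (hmul (hinv g) g') = xi1 g' - xi1 g := by
  simp only [hmul, hinv, xi1, Prod.mk_sub_mk, Prod.mk.injEq]
  constructor <;> ring

lemma sqnorm_sub_comm (p q : ℝ × ℝ) : sqnorm (p - q) = sqnorm (q - p) := by
  simp only [sqnorm, Prod.fst_sub, Prod.snd_sub]
  ring

lemma sqnorm_convex_combination (p q : ℝ × ℝ) (l : ℝ) :
    (1 - l) * sqnorm p + l * sqnorm q - sqnorm ((1 - l) • p + l • q) =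
      l * (1 - l) * sqnorm (p - q) := by
  simp only [sqnorm, Prod.fst_add, Prod.snd_add, Prod.smul_fst, Prod.smul_snd, Prod.fst_sub,
    Prod.snd_sub, smul_eq_mul]
  ring

lemma sqnorm_xi1_tcc (g g' : ℝ × ℝ × ℝ) (l : ℝ) :
    (1 - l) * sqnorm (xi1 g) + l * sqnorm (xi1 g') - sqnorm (xi1 (tcc g g' l)) =
      l * (1 - l) * sqnorm (xi1 g - xi1 g') := by
  rw [xi1_tcc]
  exact sqnorm_convex_combination _ _ _

lemma EReal.coe_mul_add_coe {c : ℝ} (hc : 0 ≤ c) (x : EReal) (s : ℝ) :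
    (c : EReal) * (x + s) = c * x + (c * s : ℝ) := by
  rw [EReal.left_distrib_of_nonneg_of_ne_top (EReal.coe_nonneg.2 hc) (EReal.coe_ne_top c),
    EReal.coe_mul]

lemma EReal.le_mul_add_mul_add_coe_iff {a b p q r e : ℝ} (ha : 0 ≤ a) (hb : 0 ≤ b)
    (h : a * p + b * q = e + r) (x y z : EReal) :
    z ≤ a * x + b * y + e ↔ z + r ≤ a * (x + p) + b * (y + q) := by
  have hrhs : (a : EReal) * (x + p) + b * (y + q) = a * x + b * y + e + r := by
    rw [EReal.coe_mul_add_coe ha, EReal.coe_mul_add_coe hb, add_add_add_comm, ← EReal.coe_add, h,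
      EReal.coe_add, ← add_assoc]
  rw [hrhs, (EReal.addLECancellable_coe r).add_le_add_iff_right]

theorem Hsemiconvex_iff_shift_Hconvex_general (Ω : Set (ℝ × ℝ × ℝ))
    (u : ℝ × ℝ × ℝ → EReal) (ℓ : ℝ) :
    (∀ g : ℝ × ℝ × ℝ, ∀ g' ∈ HP g, ∀ l ∈ Set.Icc (0 : ℝ) 1,
      (1 - l) * sqnorm (xi1 g) + l * sqnorm (xi1 g') - sqnorm (xi1 (tcc g g' l)) =
        l * (1 - l) * sqnorm (xi1 g - xi1 g')) ∧
    ((∀ g ∈ Ω, ∀ g' ∈ HP g ∩ Ω, ∀ l ∈ Set.Icc (0 : ℝ) 1,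
        u (tcc g g' l) ≤ ((1 - l : ℝ) : EReal) * u g + ((l : ℝ) : EReal) * u g' +
          ((ℓ * l * (1 - l) * sqnorm (xi1 (hmul (hinv g) g')) : ℝ) : EReal)) ↔
      (∀ g ∈ Ω, ∀ g' ∈ HP g ∩ Ω, ∀ l ∈ Set.Icc (0 : ℝ) 1,
        u (tcc g g' l) + ((ℓ * sqnorm (xi1 (tcc g g' l)) : ℝ) : EReal) ≤
          ((1 - l : ℝ) : EReal) * (u g + ((ℓ * sqnorm (xi1 g) : ℝ) : EReal)) +
            ((l : ℝ) : EReal) * (u g' + ((ℓ * sqnorm (xi1 g') : ℝ) : EReal)))) := by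
  refine ⟨fun g g' _ l _ => sqnorm_xi1_tcc g g' l, ?_⟩
  refine forall₂_congr fun g _ => forall₂_congr fun g' _ => forall₂_congr fun l hl => ?_
  refine EReal.le_mul_add_mul_add_coe_iff (sub_nonneg.2 hl.2) hl.1 ?_ _ _ _
  rw [xi1_hmul_hinv, sqnorm_sub_comm]
  linear_combination ℓ * sqnorm_xi1_tcc g g' l

/-- `u` is `ℓ` H-semiconvex on an H-convex set `Ω` iff `g ↦ u g + ℓ‖ξ₁ g‖²` is
H-convex on `Ω`; the key algebraic identity
`(1-λ)‖ξ₁ g‖² + λ‖ξ₁ g'‖² - ‖ξ₁(σ_{g,g'}(λ))‖² = λ(1-λ)‖ξ₁ g - ξ₁ g'‖²`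
holds on horizontal segments. -/
theorem Hsemiconvex_iff_shift_Hconvex (Ω : Set (ℝ × ℝ × ℝ))
    (hΩ : ∀ g ∈ Ω, ∀ g' ∈ HP g ∩ Ω, ∀ l ∈ Set.Icc (0 : ℝ) 1, tcc g g' l ∈ Ω)
    (u : ℝ × ℝ × ℝ → EReal) (ℓ : ℝ) (hℓ : 0 < ℓ) :
    (∀ g : ℝ × ℝ × ℝ, ∀ g' ∈ HP g, ∀ l ∈ Set.Icc (0 : ℝ) 1,
      (1 - l) * sqnorm (xi1 g) + l * sqnorm (xi1 g') - sqnorm (xi1 (tcc g g' l)) =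
        l * (1 - l) * sqnorm (xi1 g - xi1 g')) ∧
    ((∀ g ∈ Ω, ∀ g' ∈ HP g ∩ Ω, ∀ l ∈ Set.Icc (0 : ℝ) 1,
        u (tcc g g' l) ≤ ((1 - l : ℝ) : EReal) * u g + ((l : ℝ) : EReal) * u g' +
          ((ℓ * l * (1 - l) * sqnorm (xi1 (hmul (hinv g) g')) : ℝ) : EReal)) ↔
      (∀ g ∈ Ω, ∀ g' ∈ HP g ∩ Ω, ∀ l ∈ Set.Icc (0 : ℝ) 1,
        u (tcc g g' l) + ((ℓ * sqnorm (xi1 (tcc g g' l)) : ℝ) : EReal) ≤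
          ((1 - l : ℝ) : EReal) * (u g + ((ℓ * sqnorm (xi1 g) : ℝ) : EReal)) +
            ((l : ℝ) : EReal) * (u g' + ((ℓ * sqnorm (xi1 g') : ℝ) : EReal)))) :=
  Hsemiconvex_iff_shift_Hconvex_general Ω u ℓ
end

section
/- Suppose c : G × V → ℝ satisfies: for every p, the map g ↦ c(g,p) + K‖ξ₁(g)‖² is H-convex on a ball B. If ψ : Ω → (-∞,+∞] is proper and c-H-convex, then ψ(g) + K‖ξ₁(g)‖² is H-convex on B, i.e. ψ is K-H-semiconvex on B. -/
/-
The twisted convex combination `σ = g · δ_λ(g⁻¹ g')` of two points `g, g'` of a common horizontal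
plane stays in that plane, so `g` and `g'` both lie in the horizontal plane through `σ`. Hence every `c`-affine minorant `c(·, v) + α` of `ψ` on `H_σ ∩ Ω` also minorizes `ψ` at `g`
and `g'`, and the H-convexity of `c(·, v) + K‖ξ₁‖²` along `σ` bounds `c(σ, v) + α + K‖ξ₁ σ‖²` by
the convex combination of `ψ + K‖ξ₁‖²` at `g` and `g'`. Taking the supremum over the minorants
gives the same bound for `ψ(σ) + K‖ξ₁ σ‖²`.
-/

lemma mem_HP_tcc_left {g g' : ℝ × ℝ × ℝ} (h : g' ∈ HP g) (l : ℝ) : g ∈ HP (tcc g g' l) := by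
  simp only [HP, Set.mem_ofPred_eq, tcc, hmul, hinv, dil] at h ⊢
  rw [h]
  ring

lemma mem_HP_tcc_right {g g' : ℝ × ℝ × ℝ} (h : g' ∈ HP g) (l : ℝ) : g' ∈ HP (tcc g g' l) := by
  simp only [HP, Set.mem_ofPred_eq, tcc, hmul, hinv, dil] at h ⊢
  rw [h]
  ring

namespace EReal

lemma coe_mul_le_coe_mul {l a : ℝ} {y : EReal} (hl : 0 ≤ l) (h : (a : EReal) ≤ y) :
    ((l * a : ℝ) : EReal) ≤ (l : EReal) * y := by
  rw [coe_mul]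
  exact mul_le_mul_of_nonneg_left h (EReal.coe_nonneg.mpr hl)

lemma coe_le_convex_comb {x a b l : ℝ} {A B : EReal} (hl : l ∈ Set.Icc (0 : ℝ) 1)
    (hx : x ≤ (1 - l) * a + l * b) (ha : (a : EReal) ≤ A) (hb : (b : EReal) ≤ B) :
    (x : EReal) ≤ ((1 - l : ℝ) : EReal) * A + (l : EReal) * B :=
  calc (x : EReal) ≤ (((1 - l) * a + l * b : ℝ) : EReal) := EReal.coe_le_coe_iff.mpr hx
    _ = (((1 - l) * a : ℝ) : EReal) + ((l * b : ℝ) : EReal) := coe_add _ _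
    _ ≤ ((1 - l : ℝ) : EReal) * A + (l : EReal) * B :=
      add_le_add (coe_mul_le_coe_mul (_root_.sub_nonneg.mpr hl.2) ha) (coe_mul_le_coe_mul hl.1 hb)

lemma sSup_add_coe_le {S : Set EReal} {r : ℝ} {T : EReal} (h : ∀ x ∈ S, x + r ≤ T) :
    sSup S + r ≤ T := by
  have hsub (x : EReal) : x ≤ T - r ↔ x + r ≤ T :=
    le_sub_iff_add_le (.inl (coe_ne_bot r)) (.inl (coe_ne_top r))
  exact (hsub _).1 (sSup_le fun x hx => (hsub x).2 (h x hx))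

end EReal

theorem cHconvex_implies_Hsemiconvex_general
    (c : ℝ × ℝ × ℝ → ℝ × ℝ → ℝ) (K : ℝ) (Ω B : Set (ℝ × ℝ × ℝ)) (hBΩ : B ⊆ Ω)
    (hBconv : ∀ g ∈ B, ∀ g' ∈ HP g ∩ B, ∀ l ∈ Set.Icc (0 : ℝ) 1, tcc g g' l ∈ B)
    (hc : ∀ p : ℝ × ℝ, ∀ g ∈ B, ∀ g' ∈ HP g ∩ B, ∀ l ∈ Set.Icc (0 : ℝ) 1,
      c (tcc g g' l) p + K * sqnorm (xi1 (tcc g g' l)) ≤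
        (1 - l) * (c g p + K * sqnorm (xi1 g)) + l * (c g' p + K * sqnorm (xi1 g')))
    (ψ : ℝ × ℝ × ℝ → EReal)
    (hψ : ∀ g ∈ Ω,
      (∃ v : ℝ × ℝ, ∃ α : ℝ, ∀ g' ∈ HP g ∩ Ω, ((c g' v + α : ℝ) : EReal) ≤ ψ g') ∧
      ψ g = sSup {x : EReal | ∃ v : ℝ × ℝ, ∃ α : ℝ,
        (∀ g' ∈ HP g ∩ Ω, ((c g' v + α : ℝ) : EReal) ≤ ψ g') ∧
        x = ((c g v + α : ℝ) : EReal)}) :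
    ∀ g ∈ B, ∀ g' ∈ HP g ∩ B, ∀ l ∈ Set.Icc (0 : ℝ) 1,
      ψ (tcc g g' l) + ((K * sqnorm (xi1 (tcc g g' l)) : ℝ) : EReal) ≤
        ((1 - l : ℝ) : EReal) * (ψ g + ((K * sqnorm (xi1 g) : ℝ) : EReal)) +
          ((l : ℝ) : EReal) * (ψ g' + ((K * sqnorm (xi1 g') : ℝ) : EReal)) := by
  intro g hg g' hg' l hl
  rw [(hψ _ (hBΩ (hBconv g hg g' hg' l hl))).2]
  refine EReal.sSup_add_coe_le ?_
  rintro _ ⟨v, α, hminor, rfl⟩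
  have hminor_at {h} (hh : h ∈ HP (tcc g g' l)) (hB : h ∈ B) :
      ((c h v + α + K * sqnorm (xi1 h) : ℝ) : EReal) ≤
        ψ h + ((K * sqnorm (xi1 h) : ℝ) : EReal) := by
    rw [EReal.coe_add]
    exact add_le_add_left (hminor h ⟨hh, hBΩ hB⟩) _
  rw [← EReal.coe_add]
  refine EReal.coe_le_convex_comb hl ?_ (hminor_at (mem_HP_tcc_left hg'.1 l) hg)
    (hminor_at (mem_HP_tcc_right hg'.1 l) hg'.2)
  linarith [hc v g hg g' hg' l hl]

/-- If for every `p` the map `g ↦ c g p + K‖ξ₁ g‖²` is H-convex on a ball `B`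
and `ψ` is proper and `c` H-convex on `Ω`, then `g ↦ ψ g + K‖ξ₁ g‖²` is
H-convex on `B`, i.e. `ψ` is `K` H-semiconvex on `B`. -/
theorem cHconvex_implies_Hsemiconvex
    (c : ℝ × ℝ × ℝ → ℝ × ℝ → ℝ) (K : ℝ) (Ω B : Set (ℝ × ℝ × ℝ)) (hBΩ : B ⊆ Ω)
    (hBconv : ∀ g ∈ B, ∀ g' ∈ HP g ∩ B, ∀ l ∈ Set.Icc (0 : ℝ) 1, tcc g g' l ∈ B)
    (hc : ∀ p : ℝ × ℝ, ∀ g ∈ B, ∀ g' ∈ HP g ∩ B, ∀ l ∈ Set.Icc (0 : ℝ) 1,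
      c (tcc g g' l) p + K * sqnorm (xi1 (tcc g g' l)) ≤
        (1 - l) * (c g p + K * sqnorm (xi1 g)) + l * (c g' p + K * sqnorm (xi1 g')))
    (ψ : ℝ × ℝ × ℝ → EReal)
    (hproper : (∀ g, ψ g ≠ ⊥) ∧ ∃ g ∈ Ω, ψ g ≠ ⊤)
    (hψ : ∀ g ∈ Ω,
      (∃ v : ℝ × ℝ, ∃ α : ℝ, ∀ g' ∈ HP g ∩ Ω, ((c g' v + α : ℝ) : EReal) ≤ ψ g') ∧
      ψ g = sSup {x : EReal | ∃ v : ℝ × ℝ, ∃ α : ℝ,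
        (∀ g' ∈ HP g ∩ Ω, ((c g' v + α : ℝ) : EReal) ≤ ψ g') ∧
        x = ((c g v + α : ℝ) : EReal)}) :
    ∀ g ∈ B, ∀ g' ∈ HP g ∩ B, ∀ l ∈ Set.Icc (0 : ℝ) 1,
      ψ (tcc g g' l) + ((K * sqnorm (xi1 (tcc g g' l)) : ℝ) : EReal) ≤
        ((1 - l : ℝ) : EReal) * (ψ g + ((K * sqnorm (xi1 g) : ℝ) : EReal)) +
          ((l : ℝ) : EReal) * (ψ g' + ((K * sqnorm (xi1 g') : ℝ) : EReal)) :=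
  cHconvex_implies_Hsemiconvex_general c K Ω B hBΩ hBconv hc ψ hψ
end
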